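/- arXiv:1811.07764 — 10 statements merged into one kernel-verified Lean document; each statement's English description precedes it below -/
import Mathlib

section
/- Let X be a nonempty compact metric space, f : X → X a homeomorphism, and let σ_1, …, σ_m be nonempty, pairwise disjoint, closed subsets of X with f(σ_i) = σ_i for every i. If a point x ∈ X satisfies α_f(x) ⊆ σ_1 ∪ … ∪ σ_m, then there is exactly one index i with α_f(x) ⊆ σ_i. -/
open Filter Topology Set

/-- The ω-limit set of a point `x` under a map `f`: all `y` such that
`f^[k j] x → y` for some sequence `k j → +∞`.  The α-limit set of `x` under a
homeomorphism `f` is the ω-limit set of `x` under `f⁻¹`. -/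
def omegaSet {X : Type*} [TopologicalSpace X] (f : X → X) (x : X) : Set X :=
  { y | ∃ k : ℕ → ℕ, Tendsto k atTop atTop ∧
      Tendsto (fun j => f^[k j] x) atTop (𝓝 y) }

/-- If `f` is a homeomorphism of a nonempty compact metric space and
`σ 1, …, σ m` are nonempty, pairwise disjoint, closed invariant sets, then any
point whose α-limit set is contained in their union has its α-limit set
contained in exactly one of them. -/
theorem alphaSet_subset_unique_basic_set
    {X : Type*} [MetricSpace X] [CompactSpace X] [Nonempty X]
    (f : X ≃ₜ X) (m : ℕ) (σ : Fin m → Set X)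
    (hne : ∀ i, (σ i).Nonempty)
    (hclosed : ∀ i, IsClosed (σ i))
    (hdisj : ∀ i j, i ≠ j → Disjoint (σ i) (σ j))
    (hinv : ∀ i, ⇑f '' σ i = σ i)
    (x : X) (hx : omegaSet (⇑f.symm) x ⊆ ⋃ i, σ i) :
    ∃! i, omegaSet (⇑f.symm) x ⊆ σ i := by
  set g : X → X := ⇑f.symm with hg
  set ω : Set X := omegaSet g x with hω
  -- g-invariance of the σ i
  have ginv : ∀ i, g '' σ i = σ i := by
    intro i
    conv_lhs => rw [← hinv i]
    rw [← Set.image_comp]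
    simp [hg]
  -- ω is nonempty
  have hωne : ω.Nonempty := by
    obtain ⟨a, φ, hφ, ha⟩ := CompactSpace.tendsto_subseq (fun n => g^[n] x)
    exact ⟨a, φ, hφ.tendsto_atTop, ha⟩
  -- pick z ∈ ω, and i with z ∈ σ i
  obtain ⟨z, hz⟩ := hωne
  obtain ⟨i, hzσ⟩ := Set.mem_iUnion.mp (hx hz)
  -- main claim : ω ⊆ σ i
  have main : ω ⊆ σ i := by
    by_contra hsub
    obtain ⟨y, hyω, hyσ⟩ := not_subset.mp hsub
    -- y belongs to some σ j, j ≠ i ; in particular y ∈ T, the union of the others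
    set T : Set X := ⋃ k ∈ ({i}ᶜ : Set (Fin m)), σ k with hT
    have hyT : y ∈ T := by
      obtain ⟨j, hyj⟩ := Set.mem_iUnion.mp (hx hyω)
      have hji : j ≠ i := by rintro rfl; exact hyσ hyj
      exact Set.mem_biUnion hji hyj
    have hTclosed : IsClosed T :=
      Set.Finite.isClosed_biUnion (Set.toFinite _) (fun k _ => hclosed k)
    have hdisjT : Disjoint (σ i) T := by
      rw [hT, Set.disjoint_iUnion₂_right]
      exact fun k hk => hdisj i k (Ne.symm hk)
    obtain ⟨δ, hδ, hdisj2⟩ :=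
      hdisjT.exists_cthickenings ((hclosed i).isCompact) hTclosed
    set U : Set X := Metric.thickening δ (σ i) with hU
    have hUopen : IsOpen U := Metric.isOpen_thickening
    have hσU : σ i ⊆ U := Metric.self_subset_thickening hδ _
    have hclU : closure U ⊆ Metric.cthickening δ (σ i) :=
      Metric.closure_thickening_subset_cthickening δ _
    have hyU : y ∉ closure U := fun h =>
      (hdisj2.ne_of_mem (hclU h) (Metric.self_subset_cthickening _ hyT)) rfl
    -- the orbit enters U infinitely often
    have h1 : ∀ N : ℕ, ∃ n ≥ N, g^[n] x ∈ U := by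
      intro N
      obtain ⟨k, hk, hkz⟩ := hz
      have e1 : ∀ᶠ j in atTop, g^[k j] x ∈ U :=
        hkz.eventually (hUopen.mem_nhds (hσU hzσ))
      have e2 : ∀ᶠ j in atTop, N ≤ k j := hk.eventually_ge_atTop N
      obtain ⟨j, hj1, hj2⟩ := (e1.and e2).exists
      exact ⟨k j, hj2, hj1⟩
    -- the orbit leaves U infinitely often
    have h2 : ∀ N : ℕ, ∃ n ≥ N, g^[n] x ∉ U := by
      intro N
      obtain ⟨k, hk, hky⟩ := hyω
      have e1 : ∀ᶠ j in atTop, g^[k j] x ∈ (closure U)ᶜ :=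
        hky.eventually (isClosed_closure.isOpen_compl.mem_nhds hyU)
      have e2 : ∀ᶠ j in atTop, N ≤ k j := hk.eventually_ge_atTop N
      obtain ⟨j, hj1, hj2⟩ := (e1.and e2).exists
      exact ⟨k j, hj2, fun h => hj1 (subset_closure h)⟩
    -- hence there are infinitely many "exit times"
    have hfreq : ∃ᶠ n in atTop, g^[n] x ∈ U ∧ g^[n+1] x ∉ U := by
      rw [frequently_atTop]
      intro N
      classical
      obtain ⟨a, haN, haU⟩ := h1 N
      obtain ⟨b, hba, hbU⟩ := h2 (a + 1)
      set P : ℕ → Prop := fun n => a ≤ n ∧ g^[n] x ∈ U with hP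
      have hab : a ≤ b - 1 := by omega
      set n := Nat.findGreatest P (b - 1) with hn
      have hPn : P n := Nat.findGreatest_spec hab ⟨le_rfl, haU⟩
      have hnb : n ≤ b - 1 := Nat.findGreatest_le _
      refine ⟨n, le_trans haN hPn.1, hPn.2, ?_⟩
      intro hU1
      rcases eq_or_lt_of_le (show n + 1 ≤ b by omega) with h | h
      · exact hbU (h ▸ hU1)
      · exact Nat.findGreatest_is_greatest (Nat.lt_succ_self n)
          (by omega) ⟨le_trans hPn.1 (Nat.le_succ n), hU1⟩
    obtain ⟨φ, hφmono, hφ⟩ := extraction_of_frequently_atTop hfreq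
    -- a limit point of the exit times
    obtain ⟨w, ψ, hψmono, hw⟩ := CompactSpace.tendsto_subseq (fun j => g^[φ j] x)
    have hwω : w ∈ ω := ⟨φ ∘ ψ, (hφmono.comp hψmono).tendsto_atTop, hw⟩
    have hwcl : w ∈ closure U :=
      mem_closure_of_tendsto hw (Eventually.of_forall fun j => (hφ (ψ j)).1)
    -- w must lie in σ i
    have hwσ : w ∈ σ i := by
      obtain ⟨k, hk⟩ := Set.mem_iUnion.mp (hx hwω)
      rcases eq_or_ne k i with rfl | hki
      · exact hk
      · exact absurd rfl (hdisj2.ne_of_mem (hclU hwcl)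
          (Metric.self_subset_cthickening _ (Set.mem_biUnion hki hk)))
    -- hence g w ∈ σ i ⊆ U, and the orbit at times φ (ψ j) + 1 converges to g w
    have hgw : g w ∈ U := hσU (by rw [← ginv i]; exact ⟨w, hwσ, rfl⟩)
    have hcont : Tendsto (fun j => g^[φ (ψ j) + 1] x) atTop (𝓝 (g w)) := by
      simp only [Function.iterate_succ_apply']
      exact (f.symm.continuous.tendsto w).comp hw
    have : ∀ᶠ j in atTop, g^[φ (ψ j) + 1] x ∈ U :=
      hcont.eventually (hUopen.mem_nhds hgw)
    obtain ⟨j, hj⟩ := this.exists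
    exact (hφ (ψ j)).2 hj
  refine ⟨i, main, fun j hj => ?_⟩
  rcases eq_or_ne j i with rfl | hji
  · rfl
  · exact absurd rfl ((hdisj j i hji).ne_of_mem (hj hz) (main hz))
end

section
/- Standing setup: X is a nonempty compact metric space and f : X → X a homeomorphism; σ_1, …, σ_m are nonempty, pairwise disjoint, closed sets with f(σ_j) = σ_j; q_1, …, q_r are fixed points of f with pairwise disjoint open neighborhoods b_1, …, b_r such that cl(b_i) ⊆ f(b_i), ⋂_{k≥0} f^{-k}(b_i) = {q_i}, and each b_i is disjoint from σ_1 ∪ … ∪ σ_m; moreover for every x ∈ X both ω_f(x) and α_f(x) are contained in {q_1, …, q_r} ∪ σ_1 ∪ … ∪ σ_m. Set A = ⋂_{k≥0} f^k(X ∖ (b_1 ∪ … ∪ b_r)). Then A = { x ∈ X : α_f(x) ⊆ σ_1 ∪ … ∪ σ_m }. -/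
open Filter Topology Set

set_option maxHeartbeats 1000000 in
/-- Standing setup of Lemma 2(1): saddle basic sets `σ j` and repelling fixed
points `q i` with expanding trapping balls `b i`.  The attracting set
`A = ⋂_{k≥0} f^k (X ∖ ⋃ b i)` equals the set of points whose α-limit set is
contained in the union of the saddle sets. -/
theorem attracting_set_eq_points_with_alpha_in_saddles
    {X : Type*} [MetricSpace X] [CompactSpace X] [Nonempty X]
    (f : X ≃ₜ X) (m r : ℕ)
    (σ : Fin m → Set X) (q : Fin r → X) (b : Fin r → Set X)
    (hσne : ∀ j, (σ j).Nonempty)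
    (hσclosed : ∀ j, IsClosed (σ j))
    (hσdisj : ∀ j j', j ≠ j' → Disjoint (σ j) (σ j'))
    (hσinv : ∀ j, ⇑f '' σ j = σ j)
    (hfix : ∀ i, f (q i) = q i)
    (hbopen : ∀ i, IsOpen (b i))
    (hqb : ∀ i, q i ∈ b i)
    (hbdisj : ∀ i i', i ≠ i' → Disjoint (b i) (b i'))
    (hexp : ∀ i, closure (b i) ⊆ ⇑f '' b i)
    (hbasin : ∀ i, (⋂ k : ℕ, (⇑f)^[k] ⁻¹' b i) = {q i})
    (hbσ : ∀ i j, Disjoint (b i) (σ j))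
    (hω : ∀ x, omegaSet (⇑f) x ⊆ Set.range q ∪ ⋃ j, σ j)
    (hα : ∀ x, omegaSet (⇑f.symm) x ⊆ Set.range q ∪ ⋃ j, σ j)
    (A : Set X) (hA : A = ⋂ k : ℕ, (⇑f)^[k] '' (⋃ i, b i)ᶜ) :
    A = { x | omegaSet (⇑f.symm) x ⊆ ⋃ j, σ j } := by
  set g : X → X := ⇑f.symm with hg
  set S : Set X := (⋃ i, b i)ᶜ with hS
  have hginv : Function.LeftInverse g ⇑f := f.symm_apply_apply
  have hginv' : Function.LeftInverse ⇑f g := f.apply_symm_apply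
  -- membership in A
  have memA : ∀ x : X, x ∈ A ↔ ∀ k : ℕ, g^[k] x ∈ S := by
    intro x
    rw [hA, mem_iInter]
    refine forall_congr' fun k => ?_
    constructor
    · rintro ⟨y, hy, rfl⟩
      rwa [hginv.iterate k _]
    · intro h
      exact ⟨g^[k] x, h, hginv'.iterate k x⟩
  -- g maps closure (b i) into b i
  have hgb : ∀ i, ∀ z ∈ closure (b i), g z ∈ b i := by
    intro i z hz
    obtain ⟨w, hw, rfl⟩ := hexp i hz
    rwa [hginv w]
  ext x
  simp only [mem_setOf_eq]
  rw [memA x]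
  constructor
  · -- forward: orbit stays in S ⇒ α-limit set ⊆ ⋃ σ
    intro hx z hz
    rcases hα x hz with hq | hσ
    · exfalso
      obtain ⟨i, rfl⟩ := hq
      obtain ⟨k, hk, hkt⟩ := hz
      have hzS : q i ∈ S := by
        have hSc : IsClosed S := (isOpen_iUnion fun i => hbopen i).isClosed_compl
        exact hSc.mem_of_tendsto hkt (Eventually.of_forall fun j => hx (k j))
      exact hzS (mem_iUnion.mpr ⟨i, hqb i⟩)
    · exact hσ
  · -- backward: α-limit ⊆ ⋃ σ ⇒ orbit stays in S
    intro hx k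
    by_contra hk
    have hk' : g^[k] x ∈ ⋃ i, b i := not_not.mp (fun h => hk h)
    obtain ⟨i, hki⟩ := mem_iUnion.mp hk'
    -- the backward orbit stays in b i
    have horb : ∀ n : ℕ, g^[k + n] x ∈ b i := by
      intro n
      induction n with
      | zero => simpa using hki
      | succ n ih =>
        have : g^[k + (n + 1)] x = g (g^[k + n] x) := by
          rw [← Function.iterate_succ_apply' g (k + n) x]
          rfl
        rw [this]
        exact hgb i _ (subset_closure ih)
    -- extract a convergent subsequence
    have hcls : IsCompact (closure (b i)) := isClosed_closure.isCompact
    obtain ⟨z, hzcl, φ, hφ, hφt⟩ :=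
      hcls.tendsto_subseq (x := fun n => g^[k + n] x)
        (fun n => subset_closure (horb n))
    have hzα : z ∈ omegaSet g x := by
      refine ⟨fun n => k + φ n, ?_, hφt⟩
      exact tendsto_atTop_mono (fun n => Nat.le_add_left (φ n) k) hφ.tendsto_atTop
    obtain ⟨j, hzj⟩ := mem_iUnion.mp (hx hzα)
    -- g z ∈ b i and g z ∈ σ j, contradiction
    have h1 : g z ∈ b i := hgb i z hzcl
    have h2 : g z ∈ σ j := by
      have : z ∈ ⇑f '' σ j := by rw [hσinv j]; exact hzj
      obtain ⟨w, hw, rfl⟩ := this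
      rwa [hginv w]
    exact (hbσ i j).ne_of_mem h1 h2 rfl
end

section
/- Let X be a nonempty compact metric space and f : X → X a homeomorphism; let q_1, …, q_r be fixed points of f with pairwise disjoint open neighborhoods b_1, …, b_r such that cl(b_i) ⊆ f(b_i) and ⋂_{k≥0} f^{-k}(b_i) = {q_i} for every i. Set A = ⋂_{k≥0} f^k(X ∖ (b_1 ∪ … ∪ b_r)). Then for every x ∈ X with x ∉ {q_1, …, q_r} one has ω_f(x) ⊆ A; in particular X = {q_1, …, q_r} ∪ { x : ω_f(x) ⊆ A }. -/
open Filter Topology Set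

/-- If `q 1, …, q r` are repelling fixed points of a homeomorphism `f` of a
nonempty compact metric space, with pairwise disjoint expanding trapping balls
`b i`, and `A = ⋂_{k≥0} f^k (X ∖ ⋃ b i)`, then every point other than the
`q i` has its ω-limit set contained in `A`; in particular
`X = {q 1, …, q r} ∪ { x : ω_f(x) ⊆ A }`. -/
theorem omega_subset_attracting_set_off_sources
    {X : Type*} [MetricSpace X] [CompactSpace X] [Nonempty X]
    (f : X ≃ₜ X) (r : ℕ) (q : Fin r → X) (b : Fin r → Set X)
    (hfix : ∀ i, f (q i) = q i)
    (hbopen : ∀ i, IsOpen (b i))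
    (hqb : ∀ i, q i ∈ b i)
    (hbdisj : ∀ i i', i ≠ i' → Disjoint (b i) (b i'))
    (hexp : ∀ i, closure (b i) ⊆ ⇑f '' b i)
    (hbasin : ∀ i, (⋂ k : ℕ, (⇑f)^[k] ⁻¹' b i) = {q i})
    (A : Set X) (hA : A = ⋂ k : ℕ, (⇑f)^[k] '' (⋃ i, b i)ᶜ) :
    (∀ x : X, x ∉ Set.range q → omegaSet (⇑f) x ⊆ A) ∧
      (Set.univ : Set X) = Set.range q ∪ { x | omegaSet (⇑f) x ⊆ A } := by
  subst hA
  have hpre : ∀ i, ⇑f ⁻¹' b i ⊆ b i := by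
    intro i y hy
    obtain ⟨z, hz, hze⟩ := hexp i (subset_closure hy)
    rwa [← f.injective hze]
  have hpren : ∀ (n : ℕ) (i), (⇑f)^[n] ⁻¹' b i ⊆ b i := by
    intro n
    induction n with
    | zero => intro i y hy; exact hy
    | succ n ih =>
      intro i y hy
      have h1 : f y ∈ (⇑f)^[n] ⁻¹' b i := by
        simpa [Function.iterate_succ_apply] using hy
      exact hpre i (ih i h1)
  have main : ∀ x : X, x ∉ Set.range q →
      omegaSet (⇑f) x ⊆ ⋂ k : ℕ, (⇑f)^[k] '' (⋃ i, b i)ᶜ := by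
    intro x hx y hy
    have hNe : ∃ N, ∀ n, N ≤ n → (⇑f)^[n] x ∉ ⋃ i, b i := by
      by_cases hx0 : x ∈ ⋃ i, b i
      · obtain ⟨i, hi⟩ := mem_iUnion.mp hx0
        have hxq : x ≠ q i := fun h => hx ⟨i, h.symm⟩
        have hxi : x ∉ ⋂ k : ℕ, (⇑f)^[k] ⁻¹' b i := by
          rw [hbasin i]; simpa using hxq
        have hN' : ∃ N, (⇑f)^[N] x ∉ b i := by
          simpa [mem_iInter] using hxi
        obtain ⟨N, hN⟩ := hN'
        refine ⟨N, fun n hn hmem => ?_⟩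
        obtain ⟨j, hj⟩ := mem_iUnion.mp hmem
        have hxj : x ∈ b j := hpren n j hj
        have hNj : (⇑f)^[N] x ∈ b j := by
          have h2 : (⇑f)^[n - N] ((⇑f)^[N] x) ∈ b j := by
            rw [← Function.iterate_add_apply, Nat.sub_add_cancel hn]
            exact hj
          exact hpren (n - N) j h2
        have hij : i ≠ j := fun h => hN (h ▸ hNj)
        exact (hbdisj i j hij).ne_of_mem hi hxj rfl
      · refine ⟨0, fun n _ hmem => ?_⟩
        obtain ⟨j, hj⟩ := mem_iUnion.mp hmem
        exact hx0 (mem_iUnion.mpr ⟨j, hpren n j hj⟩)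
    obtain ⟨N, hN⟩ := hNe
    obtain ⟨k, hk, hconv⟩ := hy
    rw [mem_iInter]
    intro m
    refine ⟨(⇑f.symm)^[m] y, ?_, Function.LeftInverse.iterate f.apply_symm_apply m y⟩
    have hclosed : IsClosed (⋃ i, b i)ᶜ := (isOpen_iUnion hbopen).isClosed_compl
    have hconv' : Tendsto (fun j => (⇑f.symm)^[m] ((⇑f)^[k j] x)) atTop
        (𝓝 ((⇑f.symm)^[m] y)) :=
      ((f.symm.continuous.iterate m).continuousAt.tendsto.comp hconv)
    refine hclosed.mem_of_tendsto hconv' ?_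
    filter_upwards [hk.eventually_ge_atTop (N + m)] with j hj
    have hkm : m ≤ k j := le_trans (Nat.le_add_left m N) hj
    have heq : (⇑f.symm)^[m] ((⇑f)^[k j] x) = (⇑f)^[k j - m] x := by
      have h3 : (⇑f)^[k j] x = (⇑f)^[m] ((⇑f)^[k j - m] x) := by
        rw [← Function.iterate_add_apply, Nat.add_sub_cancel' hkm]
      rw [h3]
      exact Function.LeftInverse.iterate f.symm_apply_apply m _
    rw [heq]
    exact hN _ (by omega)
  refine ⟨main, ?_⟩
  ext x
  simp only [mem_univ, mem_union, mem_setOf_eq, true_iff]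
  by_cases hx : x ∈ Set.range q
  · exact Or.inl hx
  · exact Or.inr (main x hx)
end

section
/- Standing setup: X is a nonempty compact metric space and f : X → X a homeomorphism; σ_1, …, σ_m are nonempty, pairwise disjoint, closed sets with f(σ_j) = σ_j; q_1, …, q_r are fixed points of f with pairwise disjoint open neighborhoods b_1, …, b_r such that cl(b_i) ⊆ f(b_i), ⋂_{k≥0} f^{-k}(b_i) = {q_i}, and each b_i is disjoint from σ_1 ∪ … ∪ σ_m; moreover for every x ∈ X both ω_f(x) and α_f(x) are contained in {q_1, …, q_r} ∪ σ_1 ∪ … ∪ σ_m. Set A = ⋂_{k≥0} f^k(X ∖ (b_1 ∪ … ∪ b_r)). Then { x : α_f(x) ⊆ {q_1, …, q_r} } ∖ {q_1, …, q_r} = { x : ω_f(x) ⊆ A } ∖ A. -/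
open Filter Topology Set

lemma omegaSet_nonempty {X : Type*} [MetricSpace X] [CompactSpace X] (g : X → X) (x : X) :
    (omegaSet g x).Nonempty := by
  obtain ⟨y, -, φ, hφ, hconv⟩ :=
    isCompact_univ.tendsto_subseq (x := fun n => g^[n] x) (fun n => Set.mem_univ _)
  exact ⟨y, φ, hφ.tendsto_atTop, hconv⟩

lemma omega_freq {X : Type*} [TopologicalSpace X] {g : X → X} {x y : X}
    (hy : y ∈ omegaSet g x) {U : Set X} (hU : IsOpen U) (hyU : y ∈ U) (N : ℕ) :
    ∃ n, N ≤ n ∧ g^[n] x ∈ U := by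
  obtain ⟨k, hk, hconv⟩ := hy
  obtain ⟨j, hj1, hj2⟩ :=
    ((hk.eventually_ge_atTop N).and (hconv (hU.mem_nhds hyU))).exists
  exact ⟨k j, hj1, hj2⟩

lemma symm_iter_apply_iter {X : Type*} [TopologicalSpace X] (f : X ≃ₜ X) (k : ℕ) (x : X) :
    f.symm^[k] (f^[k] x) = x :=
  (Function.LeftInverse.iterate f.symm_apply_apply k) x

/-- Standing setup of Lemma 2(1): the punctured basin of the repelling set of
sources coincides with the punctured basin of the attracting set `A`:
`B(α̃(f)) ∖ α̃(f) = B(A(f)) ∖ A(f)`. -/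
theorem punctured_basin_sources_eq_punctured_basin_attractor
    {X : Type*} [MetricSpace X] [CompactSpace X] [Nonempty X]
    (f : X ≃ₜ X) (m r : ℕ)
    (σ : Fin m → Set X) (q : Fin r → X) (b : Fin r → Set X)
    (hσne : ∀ j, (σ j).Nonempty)
    (hσclosed : ∀ j, IsClosed (σ j))
    (hσdisj : ∀ j j', j ≠ j' → Disjoint (σ j) (σ j'))
    (hσinv : ∀ j, ⇑f '' σ j = σ j)
    (hfix : ∀ i, f (q i) = q i)
    (hbopen : ∀ i, IsOpen (b i))
    (hqb : ∀ i, q i ∈ b i)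
    (hbdisj : ∀ i i', i ≠ i' → Disjoint (b i) (b i'))
    (hexp : ∀ i, closure (b i) ⊆ ⇑f '' b i)
    (hbasin : ∀ i, (⋂ k : ℕ, (⇑f)^[k] ⁻¹' b i) = {q i})
    (hbσ : ∀ i j, Disjoint (b i) (σ j))
    (hω : ∀ x, omegaSet (⇑f) x ⊆ Set.range q ∪ ⋃ j, σ j)
    (hα : ∀ x, omegaSet (⇑f.symm) x ⊆ Set.range q ∪ ⋃ j, σ j)
    (A : Set X) (hA : A = ⋂ k : ℕ, (⇑f)^[k] '' (⋃ i, b i)ᶜ) :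
    { x | omegaSet (⇑f.symm) x ⊆ Set.range q } \ Set.range q =
      { x | omegaSet (⇑f) x ⊆ A } \ A := by
  -- b i is backward invariant
  have hfsymm : ∀ i, ∀ y ∈ b i, f.symm y ∈ b i := by
    intro i y hy
    obtain ⟨z, hz, hzy⟩ := hexp i (subset_closure hy)
    rw [← hzy, f.symm_apply_apply]; exact hz
  have hback : ∀ i (k : ℕ), ∀ y ∈ b i, f.symm^[k] y ∈ b i := by
    intro i k
    induction k with
    | zero => intro y hy; simpa using hy
    | succ n ih =>
      intro y hy
      rw [Function.iterate_succ_apply]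
      exact ih _ (hfsymm i y hy)
  -- membership in A
  have hAiff : ∀ x, x ∈ A ↔ ∀ k : ℕ, f.symm^[k] x ∉ ⋃ i, b i := by
    intro x
    rw [hA, Set.mem_iInter]
    refine forall_congr' fun k => ?_
    constructor
    · rintro ⟨z, hz, hzx⟩
      rwa [← hzx, symm_iter_apply_iter]
    · intro h
      refine ⟨f.symm^[k] x, h, ?_⟩
      have := symm_iter_apply_iter f.symm k x
      simpa using this
  have hqA : ∀ i, q i ∉ A := by
    intro i hq
    exact (hAiff (q i)).1 hq 0 (Set.mem_iUnion.2 ⟨i, by simpa using hqb i⟩)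
  -- σ is backward invariant and contained in A
  have hσsymm : ∀ j, ∀ y ∈ σ j, f.symm y ∈ σ j := by
    intro j y hy
    rw [← hσinv j] at hy
    obtain ⟨z, hz, hzy⟩ := hy
    rwa [← hzy, f.symm_apply_apply]
  have hσA : ∀ j, σ j ⊆ A := by
    intro j x hx
    rw [hAiff]
    have hxσ : ∀ k : ℕ, f.symm^[k] x ∈ σ j := by
      intro k
      induction k with
      | zero => simpa using hx
      | succ n ih =>
        rw [Function.iterate_succ_apply']
        exact hσsymm j _ ih
    intro k hk
    obtain ⟨i, hi⟩ := Set.mem_iUnion.1 hk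
    exact (hbσ i j).ne_of_mem hi (hxσ k) rfl
  ext x
  simp only [Set.mem_diff, Set.mem_setOf_eq]
  constructor
  · rintro ⟨hαQ, hxQ⟩
    -- ω(x) contains no q i
    have hωA : omegaSet (⇑f) x ⊆ A := by
      intro y hy
      rcases hω x hy with hQ | hσ
      · exfalso
        obtain ⟨i, hi⟩ := hQ
        -- forward orbit of x stays in b i
        have horb : ∀ k : ℕ, f^[k] x ∈ b i := by
          intro k
          obtain ⟨n, hkn, hn⟩ := omega_freq hy (hbopen i) (hi ▸ hqb i) k
          have h1 : f^[n] x = f^[n - k] (f^[k] x) := by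
            rw [← Function.iterate_add_apply]; congr 1; omega
          have : f^[k] x = f.symm^[n - k] (f^[n] x) := by
            rw [h1, symm_iter_apply_iter]
          rw [this]
          exact hback i _ _ hn
        have : x ∈ ⋂ k : ℕ, (⇑f)^[k] ⁻¹' b i := Set.mem_iInter.2 horb
        rw [hbasin i] at this
        exact hxQ ⟨i, this.symm⟩
      · obtain ⟨j, hj⟩ := Set.mem_iUnion.1 hσ
        exact hσA j hj
    refine ⟨hωA, ?_⟩
    -- x ∉ A since its backward orbit enters some b i
    obtain ⟨y, hy⟩ := omegaSet_nonempty (⇑f.symm) x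
    obtain ⟨i, hi⟩ := hαQ hy
    obtain ⟨n, -, hn⟩ := omega_freq hy (hbopen i) (hi ▸ hqb i) 0
    intro hxA
    exact (hAiff x).1 hxA n (Set.mem_iUnion.2 ⟨i, hn⟩)
  · rintro ⟨hωA, hxA⟩
    -- x ∉ range q
    have hxQ : x ∉ Set.range q := by
      rintro ⟨i, rfl⟩
      have hqω : q i ∈ omegaSet (⇑f) (q i) := by
        refine ⟨id, tendsto_id, ?_⟩
        have : ∀ j : ℕ, f^[j] (q i) = q i := by
          intro j
          induction j with
          | zero => rfl
          | succ n ih => rw [Function.iterate_succ_apply', ih, hfix]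
        simpa [this] using tendsto_const_nhds
      exact hqA i (hωA hqω)
    refine ⟨?_, hxQ⟩
    -- backward orbit eventually in some b i
    have : ∃ k : ℕ, ∃ i, f.symm^[k] x ∈ b i := by
      by_contra h
      push_neg at h
      exact hxA ((hAiff x).2 fun k hk => by
        obtain ⟨i, hi⟩ := Set.mem_iUnion.1 hk; exact h k i hi)
    obtain ⟨k, i, hk⟩ := this
    have horb : ∀ n, k ≤ n → f.symm^[n] x ∈ b i := by
      intro n hn
      have : f.symm^[n] x = f.symm^[n - k] (f.symm^[k] x) := by
        rw [← Function.iterate_add_apply]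
        congr 1; omega
      rw [this]
      exact hback i _ _ hk
    intro y hy
    -- y ∈ closure (b i)
    have hycl : y ∈ closure (b i) := by
      obtain ⟨ks, hks, hconv⟩ := hy
      refine mem_closure_of_tendsto hconv ?_
      filter_upwards [hks.eventually_ge_atTop k] with j hj
      exact horb (ks j) hj
    rcases hα x hy with hQ | hσ
    · exact hQ
    · exfalso
      obtain ⟨j, hj⟩ := Set.mem_iUnion.1 hσ
      obtain ⟨z, hz, hzy⟩ := hexp i hycl
      have : f.symm y ∈ σ j := hσsymm j y hj
      rw [← hzy, f.symm_apply_apply] at this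
      exact (hbσ i j).ne_of_mem hz this rfl
end

section
/- Let X be a compact metric space, f : X → X a homeomorphism, U ⊆ X a closed set with f⁻¹(U) ⊆ int(U), and R = ⋂_{k≥0} f^{-k}(U). Let G ⊆ X be a compact set such that for every x ∈ G there exists k ≥ 0 with f^{-k}(x) ∈ U. Then for every open set V ⊇ R there exists n_0 ∈ ℕ such that f^{-k}(G) ⊆ V for all k ≥ n_0. -/
open Filter Topology Set

/-!
Since `f⁻¹` maps `U` into `int U`, the sets `f^{-k}(U)` decrease to `R`, so by compactness one of
them already lies in `V`. Each point of `G` eventually lands in the open set `int U` and then stays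
there, so compactness of `G` gives a uniform time `N` with `f^{-N}(G) ⊆ U`; afterwards
`f^{-k}(G) ⊆ f^{-(k-N)}(U)`.
-/

section IterateImage

variable {X : Type*} {g : X → X} {U : Set X}

theorem antitone_iterate_image_of_mapsTo (hgU : MapsTo g U U) :
    Antitone fun k : ℕ => g^[k] '' U :=
  antitone_nat_of_succ_le fun k => by
    rw [Function.iterate_succ, image_comp]
    exact image_mono hgU.image_subset

theorem exists_iterate_image_subset_of_iInter_subset [TopologicalSpace X] [T2Space X]
    (hg : Continuous g) (hU : IsCompact U) (hgU : MapsTo g U U) {V : Set X} (hV : IsOpen V)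
    (hUV : ⋂ k : ℕ, g^[k] '' U ⊆ V) : ∃ m : ℕ, g^[m] '' U ⊆ V :=
  exists_subset_nhds_of_isCompact (antitone_iterate_image_of_mapsTo hgU).directed_ge
    (fun k => hU.image (hg.iterate k)) fun _ hx => hV.mem_nhds (hUV hx)

theorem exists_iterate_mapsTo_of_forall_exists_iterate_mem [TopologicalSpace X]
    (hg : Continuous g) (hgU : MapsTo g U (interior U)) {G : Set X} (hG : IsCompact G)
    (hGU : ∀ x ∈ G, ∃ k : ℕ, g^[k] x ∈ U) : ∃ N : ℕ, MapsTo g^[N] G U := by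
  -- Entering `U` at time `k` means entering the open set `int U` at time `k + 1`.
  set W : ℕ → Set X := fun n => g^[n + 1] ⁻¹' interior U
  have hW_mono : Monotone W := monotone_nat_of_le_succ fun n x hx => by
    simp only [W, mem_preimage, Function.iterate_succ_apply' g (n + 1)] at hx ⊢
    exact hgU (interior_subset hx)
  have hGW : G ⊆ ⋃ n, W n := fun x hx => by
    obtain ⟨k, hk⟩ := hGU x hx
    refine mem_iUnion.2 ⟨k, ?_⟩
    simp only [W, mem_preimage, Function.iterate_succ_apply']
    exact hgU hk
  obtain ⟨N, hN⟩ := hG.elim_directed_cover W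
    (fun n => isOpen_interior.preimage (hg.iterate _)) hGW hW_mono.directed_le
  exact ⟨N + 1, fun x hx => interior_subset (hN hx)⟩

theorem iterate_image_subset_of_mapsTo_of_iterate_image_subset (hgU : MapsTo g U U) {G V : Set X}
    {N m : ℕ} (hGU : MapsTo g^[N] G U) (hUV : g^[m] '' U ⊆ V) {k : ℕ} (hk : N + m ≤ k) :
    g^[k] '' G ⊆ V := by
  obtain ⟨j, rfl⟩ := Nat.exists_eq_add_of_le hk
  rw [show N + m + j = m + j + N by omega, Function.iterate_add, image_comp]
  exact (image_mono hGU.image_subset).trans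
    ((antitone_iterate_image_of_mapsTo hgU (Nat.le_add_right m j)).trans hUV)

end IterateImage

/-- Lemma 3(2): if `U` is a closed trapping region for `f⁻¹`, where `f` is a
homeomorphism of a compact metric space, `R = ⋂_{k≥0} f^{-k}(U)` the
corresponding repelling set, and `G` is a compact set contained in the basin of
`R`, then for every open `V ⊇ R` all sufficiently high backward iterates of `G`
are contained in `V`. -/
theorem backward_iterates_of_compact_in_basin_eventually_in_nbhd_of_repeller
    {X : Type*} [MetricSpace X] [CompactSpace X] (f : X ≃ₜ X)
    (U : Set X) (hUclosed : IsClosed U) (htrap : ⇑f.symm '' U ⊆ interior U)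
    (R : Set X) (hR : R = ⋂ k : ℕ, (⇑f.symm)^[k] '' U)
    (G : Set X) (hGcompact : IsCompact G)
    (hGbasin : ∀ x ∈ G, ∃ k : ℕ, (⇑f.symm)^[k] x ∈ U)
    (V : Set X) (hVopen : IsOpen V) (hRV : R ⊆ V) :
    ∃ n₀ : ℕ, ∀ k ≥ n₀, (⇑f.symm)^[k] '' G ⊆ V := by
  have hgU : MapsTo f.symm U (interior U) := mapsTo_iff_image_subset.2 htrap
  have hgU' : MapsTo f.symm U U := hgU.mono_right interior_subset
  obtain ⟨m, hm⟩ := exists_iterate_image_subset_of_iInter_subset f.symm.continuous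
    hUclosed.isCompact hgU' hVopen (hR ▸ hRV)
  obtain ⟨N, hN⟩ :=
    exists_iterate_mapsTo_of_forall_exists_iterate_mem f.symm.continuous hgU hGcompact hGbasin
  exact ⟨N + m, fun k hk => iterate_image_subset_of_mapsTo_of_iterate_image_subset hgU' hN hm hk⟩
end

section
/- Let X be a compact metric space and f_1, f_2 : X → X homeomorphisms. Let q_1, …, q_r be fixed points of f_1 with pairwise disjoint open neighborhoods b_1, …, b_r satisfying cl(b_i) ⊆ f_1(b_i) and ⋂_{k≥0} f_1^{-k}(b_i) = {q_i}, and let q'_1, …, q'_r be fixed points of f_2 with pairwise disjoint open neighborhoods b'_1, …, b'_r satisfying cl(b'_i) ⊆ f_2(b'_i) and ⋂_{k≥0} f_2^{-k}(b'_i) = {q'_i}. Suppose h : X ∖ {q_1, …, q_r} → X ∖ {q'_1, …, q'_r} is a homeomorphism with h(f_1(x)) = f_2(h(x)) for all x ≠ q_1, …, q_r, and h(b_i ∖ {q_i}) = b'_i ∖ {q'_i} for every i. Then the map H : X → X defined by H(q_i) = q'_i and H(x) = h(x) otherwise is a homeomorphism of X satisfying H ∘ f_1 = f_2 ∘ H.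 -/
/-!
Take `H := extend q q' h`; it is a bijection and agrees with `h` on the open set
`(range q)ᶜ`. At a source `q i`, the conjugacy carries the open neighbourhoods
`f₁^[k] ⁻¹' b i` of `q i` (punctured at the sources) into `f₂^[k] ⁻¹' b' i`, and these
shrink onto `q' i` because their closures are nested and intersect in `{q' i}`; so `H` is
continuous at `q i`. A continuous bijection of a compact Hausdorff space is a
homeomorphism, so continuity of `H⁻¹` comes for free.
-/

open Filter Topology Set Function

section Trapping

variable {X : Type*} [TopologicalSpace X] {f : X → X} {b : Set X}

lemma closure_preimage_iterate_succ_subset (hf : Continuous f) (hinj : Injective f)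
    (hexp : closure b ⊆ f '' b) (k : ℕ) : closure (f^[k + 1] ⁻¹' b) ⊆ f^[k] ⁻¹' b := by
  rw [iterate_succ', preimage_comp]
  calc closure (f^[k] ⁻¹' (f ⁻¹' b))
      ⊆ f^[k] ⁻¹' closure (f ⁻¹' b) := (hf.iterate k).closure_preimage_subset _
    _ ⊆ f^[k] ⁻¹' (f ⁻¹' closure b) := preimage_mono (hf.closure_preimage_subset b)
    _ ⊆ f^[k] ⁻¹' b := preimage_mono fun _ hx => hinj.mem_set_image.1 (hexp hx)

lemma exists_preimage_iterate_subset_of_iInter_eq [CompactSpace X] (hf : Continuous f)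
    (hinj : Injective f) (hexp : closure b ⊆ f '' b) {q : X}
    (hbasin : ⋂ k : ℕ, f^[k] ⁻¹' b = {q}) {U : Set X} (hU : U ∈ 𝓝 q) :
    ∃ k, f^[k] ⁻¹' b ⊆ U := by
  have hsucc := closure_preimage_iterate_succ_subset hf hinj hexp
  have hanti : Antitone fun k => closure (f^[k] ⁻¹' b) :=
    antitone_nat_of_succ_le fun k => (hsucc k).trans subset_closure
  have hinter : ⋂ k, closure (f^[k] ⁻¹' b) = {q} := by
    rw [← hbasin]
    exact Subset.antisymm (subset_iInter fun k => (iInter_subset _ (k + 1)).trans (hsucc k))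
      (iInter_mono fun _ => subset_closure)
  obtain ⟨k, hk⟩ := exists_subset_nhds_of_compactSpace hanti.directed_ge
    (fun _ => isClosed_closure) (by rw [hinter]; rintro x rfl; exact hU)
  exact ⟨k, subset_closure.trans hk⟩

end Trapping

lemma mapsTo_preimage_iterate_inter {X Y : Type*} {f₁ : X → X} {f₂ : Y → Y} {g : X → Y}
    {P s : Set X} {t : Set Y} (hP : MapsTo f₁ P P) (hconj : ∀ x ∈ P, g (f₁ x) = f₂ (g x))
    (hst : MapsTo g (s ∩ P) t) (k : ℕ) : MapsTo g (f₁^[k] ⁻¹' s ∩ P) (f₂^[k] ⁻¹' t) := by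
  induction k with
  | zero => exact hst
  | succ k ih =>
    rintro x ⟨hxs, hxP⟩
    have hfx : g (f₁ x) ∈ f₂^[k] ⁻¹' t := ih ⟨hxs, hP hxP⟩
    rwa [hconj x hxP] at hfx

lemma tendsto_nhdsWithin_of_semiconj_of_mapsTo {X Y : Type*} [TopologicalSpace X]
    [TopologicalSpace Y] [CompactSpace Y] {f₁ : X → X} {f₂ : Y → Y} {g : X → Y}
    {P b : Set X} {b' : Set Y} {p : X} {p' : Y}
    (hf₁ : Continuous f₁) (hb : IsOpen b) (hpb : p ∈ b) (hp : f₁ p = p)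
    (hf₂ : Continuous f₂) (hinj₂ : Injective f₂) (hexp₂ : closure b' ⊆ f₂ '' b')
    (hbasin₂ : ⋂ k : ℕ, f₂^[k] ⁻¹' b' = {p'})
    (hP : MapsTo f₁ P P) (hconj : ∀ x ∈ P, g (f₁ x) = f₂ (g x)) (hbb' : MapsTo g (b ∩ P) b') :
    Tendsto g (𝓝[P] p) (𝓝 p') := by
  intro U hU
  obtain ⟨k, hk⟩ := exists_preimage_iterate_subset_of_iInter_eq hf₂ hinj₂ hexp₂ hbasin₂ hU
  have hpk : f₁^[k] ⁻¹' b ∈ 𝓝 p :=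
    (hb.preimage (hf₁.iterate k)).mem_nhds (by rwa [mem_preimage, iterate_fixed hp])
  have hpkP : f₁^[k] ⁻¹' b ∩ P ∈ 𝓝[P] p :=
    inter_mem (mem_nhdsWithin_of_mem_nhds hpk) self_mem_nhdsWithin
  exact mem_map.2 (mem_of_superset hpkP fun x hx =>
    hk (mapsTo_preimage_iterate_inter hP hconj hbb' k hx))

section Extend

variable {ι α β : Type*} {q : ι → α} {q' : ι → β} {h : α → β}

lemma injective_of_mem_of_pairwise_disjoint {b : ι → Set α} (hqb : ∀ i, q i ∈ b i)
    (hb : Pairwise (Disjoint on b)) : Injective q := fun i j hij =>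
  by_contra fun hne => disjoint_left.1 (hb hne) (hqb i) (hij ▸ hqb j)

lemma mapsTo_compl_range_of_apply_eq {f : α → α} (hf : Injective f) (hfix : ∀ i, f (q i) = q i) :
    MapsTo f (range q)ᶜ (range q)ᶜ := by
  rintro x hx ⟨i, hi⟩
  exact hx ⟨i, hf (by rw [hfix, hi])⟩

lemma bijective_extend_of_bijOn (hq : Injective q) (hq' : Injective q')
    (hh : BijOn h (range q)ᶜ (range q')ᶜ) : Bijective (extend q q' h) := by
  have hext : ∀ x ∉ range q, extend q q' h x = h x := fun x hx => extend_apply' q' h x hx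
  have hout : ∀ x ∉ range q, ∀ i, extend q q' h x ≠ q' i := fun x hx i hxi =>
    hh.mapsTo hx ⟨i, ((hext x hx).symm.trans hxi).symm⟩
  refine ⟨fun x y hxy => ?_, fun y => ?_⟩
  · by_cases hx : x ∈ range q <;> by_cases hy : y ∈ range q
    · obtain ⟨i, rfl⟩ := hx
      obtain ⟨j, rfl⟩ := hy
      rw [hq.extend_apply, hq.extend_apply] at hxy
      rw [hq' hxy]
    · obtain ⟨i, rfl⟩ := hx
      exact (hout y hy i (hxy ▸ hq.extend_apply q' h i)).elim
    · obtain ⟨j, rfl⟩ := hy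
      exact (hout x hx j (hxy.symm ▸ hq.extend_apply q' h j)).elim
    · rw [hext x hx, hext y hy] at hxy
      exact hh.injOn hx hy hxy
  · by_cases hy : y ∈ range q'
    · obtain ⟨i, rfl⟩ := hy
      exact ⟨q i, hq.extend_apply q' h i⟩
    · obtain ⟨x, hx, rfl⟩ := hh.surjOn hy
      exact ⟨x, hext x hx⟩

lemma continuous_extend_of_tendsto [TopologicalSpace α] [T1Space α] [TopologicalSpace β]
    [Finite ι] (hq : Injective q) (hh : ContinuousOn h (range q)ᶜ)
    (hlim : ∀ i, Tendsto h (𝓝[(range q)ᶜ] (q i)) (𝓝 (q' i))) : Continuous (extend q q' h) := by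
  have hopen : IsOpen (range q)ᶜ := (finite_range q).isClosed.isOpen_compl
  have hext : EqOn (extend q q' h) h (range q)ᶜ := fun x hx => extend_apply' q' h x hx
  refine continuous_iff_continuousAt.2 fun x => ?_
  by_cases hx : x ∈ range q
  · obtain ⟨i, rfl⟩ := hx
    have hothers : (range q \ {q i})ᶜ ∈ 𝓝 (q i) :=
      (finite_range q).sdiff.isClosed.compl_mem_nhds fun hmem => hmem.2 rfl
    have hcompl : {q i}ᶜ ∩ (range q \ {q i})ᶜ = (range q)ᶜ := by
      rw [← compl_union, singleton_union, insert_sdiff_singleton,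
        insert_eq_of_mem (mem_range_self i)]
    rw [← continuousWithinAt_compl_self, ← continuousWithinAt_inter hothers, hcompl,
      ContinuousWithinAt, hq.extend_apply]
    exact (hlim i).congr' (eventuallyEq_nhdsWithin_of_eqOn hext).symm
  · exact (hh.continuousAt (hopen.mem_nhds hx)).congr
      (eventuallyEq_of_mem (hopen.mem_nhds hx) hext).symm

end Extend

theorem conjugacy_off_sources_extends_to_global_conjugacy_general
    {X : Type*} [MetricSpace X] [CompactSpace X]
    (f₁ f₂ : X ≃ₜ X) (r : ℕ)
    (q q' : Fin r → X) (b b' : Fin r → Set X)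
    (hfix₁ : ∀ i, f₁ (q i) = q i) (hfix₂ : ∀ i, f₂ (q' i) = q' i)
    (hbopen : ∀ i, IsOpen (b i))
    (hqb : ∀ i, q i ∈ b i) (hq'b' : ∀ i, q' i ∈ b' i)
    (hbdisj : ∀ i i', i ≠ i' → Disjoint (b i) (b i'))
    (hb'disj : ∀ i i', i ≠ i' → Disjoint (b' i) (b' i'))
    (hexp₂ : ∀ i, closure (b' i) ⊆ ⇑f₂ '' b' i)
    (hbasin₂ : ∀ i, (⋂ k : ℕ, (⇑f₂)^[k] ⁻¹' b' i) = {q' i})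
    (h : PartialHomeomorph X X)
    (hsrc : h.source = (Set.range q)ᶜ) (htgt : h.target = (Set.range q')ᶜ)
    (hconj : ∀ x ∉ Set.range q, h (f₁ x) = f₂ (h x))
    (hballs : ∀ i, ⇑h '' (b i \ {q i}) = b' i \ {q' i}) :
    ∃ H : X ≃ₜ X,
      (∀ i, H (q i) = q' i) ∧
      (∀ x ∉ Set.range q, H x = h x) ∧
      (∀ x, H (f₁ x) = f₂ (H x)) := by
  have hq : Injective q := injective_of_mem_of_pairwise_disjoint hqb fun i j => hbdisj i j
  have hq' : Injective q' := injective_of_mem_of_pairwise_disjoint hq'b' fun i j => hb'disj i j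
  have hP : MapsTo f₁ (range q)ᶜ (range q)ᶜ := mapsTo_compl_range_of_apply_eq f₁.injective hfix₁
  have hH_q : ∀ i, extend q q' h (q i) = q' i := hq.extend_apply q' h
  have hH_h : ∀ x ∉ range q, extend q q' h x = h x := fun x hx => extend_apply' q' h x hx
  have hmaps : ∀ i, MapsTo h (b i ∩ (range q)ᶜ) (b' i) := fun i x hx =>
    (hballs i ▸ mem_image_of_mem h ⟨hx.1, fun hxq => hx.2 ⟨i, hxq.symm⟩⟩ :
      h x ∈ b' i \ {q' i}).1
  have hcont : Continuous (extend q q' h) :=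
    continuous_extend_of_tendsto hq (hsrc ▸ h.continuousOn) fun i =>
      tendsto_nhdsWithin_of_semiconj_of_mapsTo f₁.continuous (hbopen i) (hqb i) (hfix₁ i)
        f₂.continuous f₂.injective (hexp₂ i) (hbasin₂ i) hP hconj (hmaps i)
  have hbij : Bijective (extend q q' h) :=
    bijective_extend_of_bijOn hq hq' (hsrc ▸ htgt ▸ h.bijOn)
  refine ⟨hcont.homeoOfEquivCompactToT2 (f := Equiv.ofBijective _ hbij), hH_q, hH_h, fun x => ?_⟩
  change extend q q' h (f₁ x) = f₂ (extend q q' h x)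
  by_cases hx : x ∈ range q
  · obtain ⟨i, rfl⟩ := hx
    rw [hfix₁, hH_q, hfix₂]
  · rw [hH_h _ (hP hx), hH_h x hx, hconj x hx]

/-- The final step in Theorem 1: a conjugacy `h` defined off the repelling
fixed points `q i` of `f₁` (sent onto the complement of the repelling fixed
points `q' i` of `f₂`), which matches the punctured trapping balls `b i ∖ {q i}`
with `b' i ∖ {q' i}`, extends over the fixed points to a global conjugacy
`H : X → X` with `H (q i) = q' i` and `H = h` elsewhere. -/
theorem conjugacy_off_sources_extends_to_global_conjugacy
    {X : Type*} [MetricSpace X] [CompactSpace X]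
    (f₁ f₂ : X ≃ₜ X) (r : ℕ)
    (q q' : Fin r → X) (b b' : Fin r → Set X)
    (hfix₁ : ∀ i, f₁ (q i) = q i) (hfix₂ : ∀ i, f₂ (q' i) = q' i)
    (hbopen : ∀ i, IsOpen (b i)) (hb'open : ∀ i, IsOpen (b' i))
    (hqb : ∀ i, q i ∈ b i) (hq'b' : ∀ i, q' i ∈ b' i)
    (hbdisj : ∀ i i', i ≠ i' → Disjoint (b i) (b i'))
    (hb'disj : ∀ i i', i ≠ i' → Disjoint (b' i) (b' i'))
    (hexp₁ : ∀ i, closure (b i) ⊆ ⇑f₁ '' b i)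
    (hexp₂ : ∀ i, closure (b' i) ⊆ ⇑f₂ '' b' i)
    (hbasin₁ : ∀ i, (⋂ k : ℕ, (⇑f₁)^[k] ⁻¹' b i) = {q i})
    (hbasin₂ : ∀ i, (⋂ k : ℕ, (⇑f₂)^[k] ⁻¹' b' i) = {q' i})
    (h : PartialHomeomorph X X)
    (hsrc : h.source = (Set.range q)ᶜ) (htgt : h.target = (Set.range q')ᶜ)
    (hconj : ∀ x ∉ Set.range q, h (f₁ x) = f₂ (h x))
    (hballs : ∀ i, ⇑h '' (b i \ {q i}) = b' i \ {q' i}) :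
    ∃ H : X ≃ₜ X,
      (∀ i, H (q i) = q' i) ∧
      (∀ x ∉ Set.range q, H x = h x) ∧
      (∀ x, H (f₁ x) = f₂ (H x)) :=
  conjugacy_off_sources_extends_to_global_conjugacy_general f₁ f₂ r q q' b b' hfix₁ hfix₂ hbopen hqb
    hq'b' hbdisj hb'disj hexp₂ hbasin₂ h hsrc htgt hconj hballs
end

section
/- Let X be a topological space, f : X → X a homeomorphism, and q a fixed point of f with an open neighborhood b such that cl(b) ⊆ f(b) and ⋂_{k≥0} f^{-k}(b) = {q}. Then for every x ∈ ⋃_{k≥0} f^k(b) with x ≠ q there exists exactly one k ∈ ℤ such that f^k(x) ∈ f(b) ∖ b. -/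
open Filter Topology Set

/-- Generating-set property (Lemma 2): if `q` is a repelling fixed point of a
homeomorphism `f` with trapping ball `b`, then every point `x ≠ q` of the basin
`⋃_{k≥0} f^k(b)` has exactly one integer iterate in the fundamental annulus
`f(b) ∖ b`. -/
theorem orbit_crosses_fundamental_annulus_once
    {X : Type*} [TopologicalSpace X] (f : X ≃ₜ X)
    (q : X) (hfix : f q = q)
    (b : Set X) (hbopen : IsOpen b) (hqb : q ∈ b)
    (hexp : closure b ⊆ ⇑f '' b)
    (hbasin : (⋂ k : ℕ, (⇑f)^[k] ⁻¹' b) = {q})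
    (x : X) (hx : x ∈ ⋃ k : ℕ, (⇑f)^[k] '' b) (hxq : x ≠ q) :
    ∃! k : ℤ, ((f.toEquiv ^ k : Equiv.Perm X) x) ∈ (⇑f '' b) \ b := by
  set a : Equiv.Perm X := f.toEquiv with ha
  -- step down: if a^k x ∈ b then a^(k-1) x ∈ b
  have hstep : ∀ k : ℤ, (a ^ k) x ∈ b → (a ^ (k - 1)) x ∈ b := by
    intro k hk
    obtain ⟨y, hy, hyeq⟩ := hexp (subset_closure hk)
    have : (a ^ (k - 1)) x = y := by
      have h1 : a ((a ^ (k - 1)) x) = (a ^ k) x := by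
        have : a * a ^ (k - 1) = a ^ k := by
          rw [← zpow_one_add]; ring_nf
        calc a ((a ^ (k - 1)) x) = (a * a ^ (k - 1)) x := rfl
          _ = (a ^ k) x := by rw [this]
      have h2 : a y = (a ^ k) x := hyeq
      have := h1.trans h2.symm
      exact a.injective this
    rw [this]; exact hy
  -- downward closedness
  have hdown : ∀ m k : ℤ, k ≤ m → (a ^ m) x ∈ b → (a ^ k) x ∈ b := by
    intro m k hkm hm
    have key : ∀ n : ℕ, (a ^ (m - n)) x ∈ b := by
      intro n
      induction n with
      | zero => simpa using hm
      | succ n ih =>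
        have := hstep (m - n) ih
        have he : (m - n : ℤ) - 1 = m - (n + 1 : ℕ) := by push_cast; ring
        rwa [he] at this
    have : k = m - ((m - k).toNat : ℤ) := by
      rw [Int.toNat_of_nonneg (by omega)]; ring
    rw [this]; exact key _
  -- relate nat iterates to zpow
  have hnat : ∀ (n : ℕ) (z : X), (a ^ (n : ℤ)) z = (⇑f)^[n] z := by
    intro n
    rw [zpow_natCast]
    induction n with
    | zero => intro z; rfl
    | succ n ih =>
      intro z
      rw [pow_succ, Function.iterate_succ_apply]
      exact ih (f z)
  -- A nonempty: some -k in A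
  obtain ⟨_, ⟨k, rfl⟩, y, hy, hyeq⟩ := hx
  have hA0 : (a ^ (-(k : ℤ))) x ∈ b := by
    have : (a ^ (-(k : ℤ))) x = y := by
      have : (a ^ (k : ℤ)) y = x := by rw [hnat]; exact hyeq
      calc (a ^ (-(k : ℤ))) x = (a ^ (-(k : ℤ))) ((a ^ (k : ℤ)) y) := by rw [this]
        _ = ((a ^ (-(k : ℤ))) * (a ^ (k : ℤ))) y := rfl
        _ = y := by rw [← zpow_add]; simp
    rw [this]; exact hy
  -- A bounded above: otherwise x = q
  have hbdd : ∃ N : ℤ, ∀ z : ℤ, (a ^ z) x ∈ b → z ≤ N := by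
    by_contra h
    push_neg at h
    have hall : ∀ z : ℤ, (a ^ z) x ∈ b := by
      intro z
      obtain ⟨w, hw, hzw⟩ := h z
      exact hdown w z hzw.le hw
    have : x ∈ (⋂ k : ℕ, (⇑f)^[k] ⁻¹' b) := by
      simp only [mem_iInter, mem_preimage]
      intro n
      rw [← hnat]; exact hall n
    rw [hbasin] at this
    exact hxq this
  obtain ⟨m, hmA, hmax⟩ := Int.exists_greatest_of_bdd hbdd ⟨-(k : ℤ), hA0⟩
  -- characterize annulus membership
  have hchar : ∀ z : ℤ, ((a ^ z) x ∈ (⇑f '' b) \ b) ↔ ((a ^ (z - 1)) x ∈ b ∧ (a ^ z) x ∉ b) := by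
    intro z
    constructor
    · rintro ⟨⟨y, hy, hyeq⟩, hnb⟩
      refine ⟨?_, hnb⟩
      have h1 : a ((a ^ (z - 1)) x) = (a ^ z) x := by
        have : a * a ^ (z - 1) = a ^ z := by rw [← zpow_one_add]; ring_nf
        calc a ((a ^ (z - 1)) x) = (a * a ^ (z - 1)) x := rfl
          _ = (a ^ z) x := by rw [this]
      have : (a ^ (z - 1)) x = y := a.injective (h1.trans hyeq.symm)
      rw [this]; exact hy
    · rintro ⟨hb1, hnb⟩
      refine ⟨⟨(a ^ (z - 1)) x, hb1, ?_⟩, hnb⟩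
      have : a * a ^ (z - 1) = a ^ z := by rw [← zpow_one_add]; ring_nf
      calc f ((a ^ (z - 1)) x) = (a * a ^ (z - 1)) x := rfl
        _ = (a ^ z) x := by rw [this]
  refine ⟨m + 1, (hchar (m + 1)).mpr ⟨?_, ?_⟩, ?_⟩
  · simpa using hmA
  · intro hc
    have := hmax _ hc
    omega
  · intro z hz
    obtain ⟨hz1, hz2⟩ := (hchar z).mp hz
    have h1 : z - 1 ≤ m := hmax _ hz1
    have h2 : ¬ z ≤ m := fun h => hz2 (hdown m z h hmA)
    omega
end

section
/- Let X be a topological space, f : X → X a homeomorphism, and q a fixed point of f with an open neighborhood b such that cl(b) ⊆ f(b) and ⋂_{k≥0} f^{-k}(b) = {q}. Then ⋃_{k∈ℤ} f^k( f(b) ∖ b ) = ( ⋃_{k≥0} f^k(b) ) ∖ {q}. -/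
open Filter Set

/-!
The sets `c k = fᵏ(b)`, `k ∈ ℤ`, increase with `k` because `b ⊆ f(b)`, and `fᵏ(f(b) ∖ b)` is the
step `c (k+1) ∖ c k`. For an increasing `ℤ`-indexed family, the steps cover exactly the union
minus the intersection: a point of the union outside some `c m` has a first `c k` containing it.
The union over `ℤ` is the basin `⋃_{k≥0} fᵏ(b)`, and the intersection over `k ≤ 0` is
`⋂ f⁻ᵏ(b) = {q}`.
-/

theorem Monotone.iUnion_add_one_diff {α : Type*} {s : ℤ → Set α} (hs : Monotone s) :
    ⋃ k, s (k + 1) \ s k = (⋃ k, s k) \ ⋂ k, s k := by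
  refine Subset.antisymm ?_ ?_
  · simp only [iUnion_subset_iff]
    exact fun k x ⟨hx, hxk⟩ => ⟨mem_iUnion_of_mem _ hx, fun hx' => hxk (mem_iInter.1 hx' k)⟩
  · rintro x ⟨hx, hx'⟩
    obtain ⟨n, hn⟩ := mem_iUnion.1 hx
    obtain ⟨m, hm⟩ := not_forall.1 (mt mem_iInter.2 hx')
    obtain ⟨k, hk, hk_min⟩ := Int.exists_least_of_bdd (P := fun k => x ∈ s k)
      ⟨m, fun z hz => le_of_not_gt fun hzm => hm (hs hzm.le hz)⟩ ⟨n, hn⟩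
    refine mem_iUnion.2 ⟨k - 1, ?_, fun hk' => ?_⟩
    · rwa [sub_add_cancel]
    · exact (hk_min _ hk').not_gt (sub_one_lt k)

namespace Equiv.Perm

variable {α : Type*}

theorem image_zpow_add_one (e : Perm α) (b : Set α) (k : ℤ) :
    ⇑(e ^ (k + 1)) '' b = ⇑(e ^ k) '' (e '' b) := by
  rw [zpow_add_one, coe_mul, image_comp]

theorem monotone_image_zpow {e : Perm α} {b : Set α} (hb : b ⊆ e '' b) :
    Monotone fun k : ℤ => ⇑(e ^ k) '' b :=
  monotone_int_of_le_succ fun k => by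
    simp only [image_zpow_add_one]
    exact image_mono hb

theorem image_zpow_neg_natCast (e : Perm α) (b : Set α) (n : ℕ) :
    ⇑(e ^ (-n : ℤ)) '' b = e^[n] ⁻¹' b := by
  rw [zpow_neg, zpow_natCast, ← coe_pow, image_eq_preimage_symm]
  rfl

theorem iUnion_image_zpow_image_diff {e : Perm α} {b : Set α} (hb : b ⊆ e '' b) :
    ⋃ k : ℤ, ⇑(e ^ k) '' (e '' b \ b) = (⋃ n : ℕ, e^[n] '' b) \ ⋂ n : ℕ, e^[n] ⁻¹' b := by
  have hmono := monotone_image_zpow hb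
  simp only [image_sdiff (Equiv.injective _), ← image_zpow_add_one]
  rw [hmono.iUnion_add_one_diff, ← hmono.iUnion_comp_tendsto_atTop tendsto_natCast_atTop_atTop,
    ← hmono.iInter_comp_tendsto_atBot (tendsto_neg_atTop_atBot.comp tendsto_natCast_atTop_atTop)]
  simp only [Function.comp_apply, zpow_natCast, coe_pow, image_zpow_neg_natCast]

end Equiv.Perm

theorem iterates_of_fundamental_annulus_tile_punctured_basin_general
    {X : Type*} [TopologicalSpace X] (f : X ≃ₜ X)
    (q : X)
    (b : Set X)
    (hexp : closure b ⊆ ⇑f '' b)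
    (hbasin : (⋂ k : ℕ, (⇑f)^[k] ⁻¹' b) = {q}) :
    (⋃ k : ℤ, ⇑(f.toEquiv ^ k : Equiv.Perm X) '' ((⇑f '' b) \ b)) =
      (⋃ k : ℕ, (⇑f)^[k] '' b) \ {q} := by
  rw [← hbasin]
  exact Equiv.Perm.iUnion_image_zpow_image_diff (subset_closure.trans hexp)

/-- Tiling property (Lemma 2): if `q` is a repelling fixed point of a
homeomorphism `f` with trapping ball `b`, then the integer iterates of the
fundamental annulus `f(b) ∖ b` cover exactly the punctured basin
`(⋃_{k≥0} f^k(b)) ∖ {q}`. -/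
theorem iterates_of_fundamental_annulus_tile_punctured_basin
    {X : Type*} [TopologicalSpace X] (f : X ≃ₜ X)
    (q : X) (hfix : f q = q)
    (b : Set X) (hbopen : IsOpen b) (hqb : q ∈ b)
    (hexp : closure b ⊆ ⇑f '' b)
    (hbasin : (⋂ k : ℕ, (⇑f)^[k] ⁻¹' b) = {q}) :
    (⋃ k : ℤ, ⇑(f.toEquiv ^ k : Equiv.Perm X) '' ((⇑f '' b) \ b)) =
      (⋃ k : ℕ, (⇑f)^[k] '' b) \ {q} :=
  iterates_of_fundamental_annulus_tile_punctured_basin_general f q b hexp hbasin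
end

section
/- Let X be a compact metric space, f : X → X a homeomorphism, and q a fixed point of f with an open neighborhood b such that cl(b) ⊆ f(b) and ⋂_{k≥0} f^{-k}(b) = {q}. Then ⋃_{k≥0} f^k(b) = { x ∈ X : α_f(x) = {q} }. -/
/-!
Write `g = f⁻¹`. The condition `closure b ⊆ f b` says that `g` maps `closure b` into `b`, so
the compact sets `gᵏ (closure b)` decrease, and their intersection lies in `⋂ₖ gᵏ b = {q}`.
By compactness they eventually lie in any given neighbourhood of `q`; hence the backward orbit
of every point that ever enters `b` converges to `q`. Conversely, if `q` is an α-limit point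
of `x`, the backward orbit of `x` enters the open neighbourhood `b` of `q`.
-/

open Filter Topology Set Function

section OmegaLimit

variable {X : Type*} [TopologicalSpace X] {g : X → X} {x q : X}

theorem omegaSet_eq_singleton_of_tendsto [T2Space X]
    (h : Tendsto (fun n => g^[n] x) atTop (𝓝 q)) : omegaSet g x = {q} := by
  ext y
  constructor
  · rintro ⟨k, hk, hy⟩
    exact tendsto_nhds_unique hy (h.comp hk)
  · rintro rfl
    exact ⟨id, tendsto_id, h⟩

theorem exists_iterate_mem_of_mem_omegaSet (hq : q ∈ omegaSet g x) {U : Set X} (hU : U ∈ 𝓝 q) :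
    ∃ n, g^[n] x ∈ U := by
  obtain ⟨k, -, hk⟩ := hq
  obtain ⟨j, hj⟩ := (hk.eventually_mem hU).exists
  exact ⟨k j, hj⟩

end OmegaLimit

section Trapping

variable {X : Type*} [TopologicalSpace X] {g : X → X} {b : Set X}

theorem iterate_succ_image_closure_subset (htrap : MapsTo g (closure b) b) (k : ℕ) :
    g^[k + 1] '' closure b ⊆ g^[k] '' b := by
  rw [iterate_succ, image_comp]
  exact image_mono htrap.image_subset

theorem antitone_iterate_image_closure (htrap : MapsTo g (closure b) b) :
    Antitone fun k => g^[k] '' closure b :=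
  antitone_nat_of_succ_le fun k =>
    (iterate_succ_image_closure_subset htrap k).trans (image_mono subset_closure)

variable [CompactSpace X] [T2Space X] {q : X}

theorem exists_iterate_image_closure_subset_of_mem_nhds (hg : Continuous g)
    (htrap : MapsTo g (closure b) b) (hq : ⋂ k, g^[k] '' b ⊆ {q}) {U : Set X} (hU : U ∈ 𝓝 q) :
    ∃ N, g^[N] '' closure b ⊆ U := by
  refine exists_subset_nhds_of_isCompact (antitone_iterate_image_closure htrap).directed_ge
    (fun k => isClosed_closure.isCompact.image (hg.iterate k)) fun y hy => ?_
  have hyb : y ∈ ⋂ k, g^[k] '' b := mem_iInter.2 fun k =>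
    iterate_succ_image_closure_subset htrap k (mem_iInter.1 hy (k + 1))
  rwa [mem_singleton_iff.1 (hq hyb)]

theorem tendsto_iterate_of_mem_closure (hg : Continuous g) (htrap : MapsTo g (closure b) b)
    (hq : ⋂ k, g^[k] '' b ⊆ {q}) {y : X} (hy : y ∈ closure b) :
    Tendsto (fun n => g^[n] y) atTop (𝓝 q) := by
  refine tendsto_def.2 fun U hU => ?_
  obtain ⟨N, hN⟩ := exists_iterate_image_closure_subset_of_mem_nhds hg htrap hq hU
  refine mem_atTop_sets.2 ⟨N, fun n hn => hN ?_⟩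
  obtain ⟨m, rfl⟩ := Nat.exists_eq_add_of_le hn
  show g^[N + m] y ∈ g^[N] '' closure b
  rw [iterate_add_apply]
  exact mem_image_of_mem _ ((htrap.mono_right subset_closure).iterate m hy)

theorem tendsto_iterate_of_iterate_mem (hg : Continuous g) (htrap : MapsTo g (closure b) b)
    (hq : ⋂ k, g^[k] '' b ⊆ {q}) {y : X} {k : ℕ} (hk : g^[k] y ∈ b) :
    Tendsto (fun n => g^[n] y) atTop (𝓝 q) := by
  rw [← tendsto_add_atTop_iff_nat k]
  simpa only [iterate_add_apply] using
    tendsto_iterate_of_mem_closure hg htrap hq (subset_closure hk)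

end Trapping

theorem Homeomorph.iterate_image_eq_preimage_symm {X : Type*} [TopologicalSpace X] (f : X ≃ₜ X)
    (k : ℕ) (s : Set X) : (⇑f)^[k] '' s = (⇑f.symm)^[k] ⁻¹' s :=
  congrFun (image_eq_preimage_of_inverse (LeftInverse.iterate f.symm_apply_apply k)
    (RightInverse.iterate f.apply_symm_apply k)) s

theorem basin_of_source_eq_points_with_alpha_q_general
    {X : Type*} [MetricSpace X] [CompactSpace X] (f : X ≃ₜ X)
    (q : X)
    (b : Set X) (hbopen : IsOpen b) (hqb : q ∈ b)
    (hexp : closure b ⊆ ⇑f '' b)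
    (hbasin : (⋂ k : ℕ, (⇑f)^[k] ⁻¹' b) = {q}) :
    (⋃ k : ℕ, (⇑f)^[k] '' b) = { x | omegaSet (⇑f.symm) x = {q} } := by
  have htrap : MapsTo f.symm (closure b) b := fun y hy => by
    obtain ⟨z, hz, rfl⟩ := hexp hy
    rwa [f.symm_apply_apply]
  have hq : ⋂ k, (⇑f.symm)^[k] '' b ⊆ {q} := by
    simpa only [f.symm.iterate_image_eq_preimage_symm, f.symm_symm] using hbasin.subset
  ext x
  simp only [mem_iUnion, f.iterate_image_eq_preimage_symm, mem_preimage, mem_ofPred_eq]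
  constructor
  · rintro ⟨k, hk⟩
    exact omegaSet_eq_singleton_of_tendsto
      (tendsto_iterate_of_iterate_mem f.symm.continuous htrap hq hk)
  · intro hx
    exact exists_iterate_mem_of_mem_omegaSet (hx ▸ rfl) (hbopen.mem_nhds hqb)

/-- If `q` is a repelling fixed point of a homeomorphism `f` of a compact
metric space, with trapping ball `b`, then the basin `⋃_{k≥0} f^k(b)` equals
the set of points whose α-limit set is exactly `{q}`. -/
theorem basin_of_source_eq_points_with_alpha_q
    {X : Type*} [MetricSpace X] [CompactSpace X] (f : X ≃ₜ X)
    (q : X) (hfix : f q = q)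
    (b : Set X) (hbopen : IsOpen b) (hqb : q ∈ b)
    (hexp : closure b ⊆ ⇑f '' b)
    (hbasin : (⋂ k : ℕ, (⇑f)^[k] ⁻¹' b) = {q}) :
    (⋃ k : ℕ, (⇑f)^[k] '' b) = { x | omegaSet (⇑f.symm) x = {q} } :=
  basin_of_source_eq_points_with_alpha_q_general f q b hbopen hqb hexp hbasin
end

section
/- Standing setup: X is a nonempty compact metric space and f : X → X a homeomorphism; σ_1, …, σ_m are nonempty, pairwise disjoint, closed sets with f(σ_j) = σ_j; q_1, …, q_r are fixed points of f with pairwise disjoint open neighborhoods b_1, …, b_r such that cl(b_i) ⊆ f(b_i), ⋂_{k≥0} f^{-k}(b_i) = {q_i}, and each b_i is disjoint from σ_1 ∪ … ∪ σ_m; moreover for every x ∈ X both ω_f(x) and α_f(x) are contained in {q_1, …, q_r} ∪ σ_1 ∪ … ∪ σ_m. Set A = ⋂_{k≥0} f^k(X ∖ (b_1 ∪ … ∪ b_r)). Then { x : ω_f(x) ⊆ A } ∖ A = ⋃_{k∈ℤ} f^k( ⋃_{i=1}^r ( f(b_i) ∖ b_i ) ). -/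
open Filter Topology Set

/-! Since `b i ⊆ f (b i)`, the sets `f^k (b i)`, `k ∈ ℤ`, increase with `k`; their intersection is
`{q i}`, so the iterates of the annulus `f (b i) \ b i` tile `V i \ {q i}`, where `V i` is their
union. The complement of `A` is `⋃ i, V i`. A point whose forward orbit accumulates at `q i`
eventually enters `b i`, hence stays in `b i` at all earlier times because `f⁻¹ (b i) ⊆ b i`, so it
is `q i`. As every `σ j` lies in `A`, it follows that `ω(x) ⊆ A` exactly when `x` is none of the
`q i`, and the `V i` meet `range q` only in their own centres. -/

open Function

theorem Monotone.iUnion_succ_sdiff_int {α : Type*} {S : ℤ → Set α} (hS : Monotone S) :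
    ⋃ k, S (k + 1) \ S k = (⋃ k, S k) \ ⋂ k, S k := by
  ext x
  simp only [mem_iUnion, Set.mem_sdiff, mem_iInter, not_forall]
  constructor
  · rintro ⟨k, hk1, hk⟩
    exact ⟨⟨k + 1, hk1⟩, k, hk⟩
  · rintro ⟨⟨n, hn⟩, l, hl⟩
    by_contra! hstep
    have hdown : ∀ k ≤ n, x ∈ S k := fun k hk =>
      Int.leInductionDown (motive := fun k _ => x ∈ S k) hn
        (fun k _ hk => hstep (k - 1) (by rwa [sub_add_cancel])) k hk
    exact hl (hS (min_le_left l n) (hdown _ (min_le_right l n)))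

namespace Equiv.Perm

variable {α : Type*} (e : Perm α) {s : Set α}

theorem monotone_zpow_image (h : s ⊆ e '' s) : Monotone fun k : ℤ => ⇑(e ^ k) '' s := by
  refine monotone_int_of_le_succ fun k => ?_
  rw [zpow_add_one, coe_mul, image_comp]
  exact image_mono h

theorem zpow_image_image_sdiff (k : ℤ) :
    ⇑(e ^ k) '' (e '' s \ s) = ⇑(e ^ (k + 1)) '' s \ ⇑(e ^ k) '' s := by
  rw [image_sdiff (e ^ k).injective, zpow_add_one, coe_mul, image_comp]

theorem iUnion_zpow_image_eq_iUnion_iterate_image (h : s ⊆ e '' s) :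
    ⋃ k : ℤ, ⇑(e ^ k) '' s = ⋃ n : ℕ, (⇑e)^[n] '' s := by
  rw [← (e.monotone_zpow_image h).iUnion_comp_tendsto_atTop tendsto_natCast_atTop_atTop]
  simp only [zpow_natCast, iterate_eq_pow]

theorem iInter_zpow_image_eq_iInter_iterate_preimage (h : s ⊆ e '' s) :
    ⋂ k : ℤ, ⇑(e ^ k) '' s = ⋂ n : ℕ, (⇑e)^[n] ⁻¹' s := by
  rw [← (e.monotone_zpow_image h).iInter_comp_tendsto_atBot
    (tendsto_neg_atTop_atBot.comp tendsto_natCast_atTop_atTop)]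
  simp only [comp_apply, zpow_neg, zpow_natCast, inv_def, image_symm_eq_preimage, iterate_eq_pow]

theorem iUnion_zpow_image_image_sdiff (h : s ⊆ e '' s) :
    ⋃ k : ℤ, ⇑(e ^ k) '' (e '' s \ s) = (⋃ n : ℕ, (⇑e)^[n] '' s) \ ⋂ n : ℕ, (⇑e)^[n] ⁻¹' s := by
  simp only [zpow_image_image_sdiff]
  rw [(e.monotone_zpow_image h).iUnion_succ_sdiff_int,
    e.iUnion_zpow_image_eq_iUnion_iterate_image h, e.iInter_zpow_image_eq_iInter_iterate_preimage h]

end Equiv.Perm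

section IterateImage

variable {α : Type*} {f : α → α}

theorem iInter_iterate_image_compl (hf : Bijective f) (s : Set α) :
    ⋂ n : ℕ, f^[n] '' sᶜ = (⋃ n : ℕ, f^[n] '' s)ᶜ := by
  simp only [image_compl_eq (hf.iterate _), compl_iUnion]

theorem subset_iInter_iterate_image_compl {s t : Set α} (ht : f '' t = t) (hst : Disjoint s t) :
    t ⊆ ⋂ n : ℕ, f^[n] '' sᶜ := fun x hx => mem_iInter.2 fun n => by
  rw [← (IsFixedPt.iterate (f := image f) ht n).eq, ← image_iterate_eq] at hx
  exact image_mono hst.subset_compl_left hx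

theorem Function.IsFixedPt.mem_iUnion_iterate_image_iff (hf : Injective f) {x : α}
    (hx : IsFixedPt f x) {s : Set α} : x ∈ ⋃ n : ℕ, f^[n] '' s ↔ x ∈ s := by
  refine ⟨fun h => ?_, fun h => mem_iUnion.2 ⟨0, by rwa [iterate_zero, image_id]⟩⟩
  obtain ⟨n, hn⟩ := mem_iUnion.1 h
  rwa [← (hx.iterate n).eq, (hf.iterate n).mem_set_image] at hn

theorem iUnion_sdiff_range_eq_iUnion_sdiff_singleton {ι : Type*} {V : ι → Set α} {q : ι → α}
    (hq : ∀ i j, q j ∈ V i → j = i) : (⋃ i, V i) \ range q = ⋃ i, V i \ {q i} := by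
  ext x
  simp only [Set.mem_sdiff, mem_iUnion, mem_range, mem_singleton_iff, not_exists]
  constructor
  · rintro ⟨⟨i, hxi⟩, hxq⟩
    exact ⟨i, hxi, fun h => hxq i h.symm⟩
  · rintro ⟨i, hxi, hxq⟩
    refine ⟨⟨i, hxi⟩, ?_⟩
    rintro j rfl
    exact hxq (by rw [hq i j hxi])

end IterateImage

section OmegaLimit

variable {X : Type*} [TopologicalSpace X] {f : X → X}

theorem mem_omegaSet_self {x : X} (hx : IsFixedPt f x) : x ∈ omegaSet f x :=
  ⟨id, tendsto_id, by simp only [id, (hx.iterate _).eq]; exact tendsto_const_nhds⟩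

theorem eq_of_mem_omegaSet {U : Set X} {p x : X} (hU : IsOpen U) (hfU : MapsTo f Uᶜ Uᶜ)
    (hp : ⋂ n : ℕ, f^[n] ⁻¹' U = {p}) (hpx : p ∈ omegaSet f x) : x = p := by
  have hpU : p ∈ U := mem_iInter.1 (hp ▸ mem_singleton p) 0
  obtain ⟨k, hk, hconv⟩ := hpx
  rw [← mem_singleton_iff, ← hp]
  refine mem_iInter.2 fun n => ?_
  obtain ⟨j, hjn, hjU⟩ :=
    ((hk.eventually_ge_atTop n).and (hconv.eventually (hU.mem_nhds hpU))).exists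
  by_contra hn
  have hout := hfU.iterate (k j - n) hn
  rw [← iterate_add_apply, Nat.sub_add_cancel hjn] at hout
  exact hout hjU

end OmegaLimit

theorem punctured_basin_of_attractor_eq_iterates_of_annuli_general
    {X : Type*} [MetricSpace X]
    (f : X ≃ₜ X) (m r : ℕ)
    (σ : Fin m → Set X) (q : Fin r → X) (b : Fin r → Set X)
    (hσinv : ∀ j, ⇑f '' σ j = σ j)
    (hfix : ∀ i, f (q i) = q i)
    (hbopen : ∀ i, IsOpen (b i))
    (hqb : ∀ i, q i ∈ b i)
    (hbdisj : ∀ i i', i ≠ i' → Disjoint (b i) (b i'))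
    (hexp : ∀ i, closure (b i) ⊆ ⇑f '' b i)
    (hbasin : ∀ i, (⋂ k : ℕ, (⇑f)^[k] ⁻¹' b i) = {q i})
    (hbσ : ∀ i j, Disjoint (b i) (σ j))
    (hω : ∀ x, omegaSet (⇑f) x ⊆ Set.range q ∪ ⋃ j, σ j)
    (A : Set X) (hA : A = ⋂ k : ℕ, (⇑f)^[k] '' (⋃ i, b i)ᶜ) :
    { x | omegaSet (⇑f) x ⊆ A } \ A =
      ⋃ k : ℤ, ⇑(f.toEquiv ^ k : Equiv.Perm X) '' (⋃ i, (⇑f '' b i) \ b i) := by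
  have hbf : ∀ i, b i ⊆ ⇑f '' b i := fun i => subset_closure.trans (hexp i)
  set V : Fin r → Set X := fun i => ⋃ n : ℕ, (⇑f)^[n] '' b i
  have hAV : A = (⋃ i, V i)ᶜ := by
    rw [hA, iInter_iterate_image_compl f.bijective]
    simp only [V, image_iUnion]
    rw [iUnion_comm]
  have hωA : {x | omegaSet f x ⊆ A} = (range q)ᶜ := by
    ext x
    refine ⟨?_, fun hx y hy => ?_⟩
    · rintro hxA ⟨i, rfl⟩
      refine (hAV ▸ hxA) (mem_omegaSet_self (hfix i)) (mem_iUnion.2 ⟨i, ?_⟩)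
      exact (IsFixedPt.mem_iUnion_iterate_image_iff f.injective (hfix i)).2 (hqb i)
    · rcases hω x hy with ⟨i, rfl⟩ | hyσ
      · exact absurd ⟨i, (eq_of_mem_omegaSet (hbopen i)
          (SurjOn.mapsTo_compl (hbf i) f.injective) (hbasin i) hy).symm⟩ hx
      · obtain ⟨j, hj⟩ := mem_iUnion.1 hyσ
        exact hA ▸ subset_iInter_iterate_image_compl (hσinv j)
          (disjoint_iUnion_left.2 fun i => hbσ i j) hj
  have hqV : ∀ i i', q i' ∈ V i → i' = i := fun i i' hi' => by
    by_contra hne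
    exact disjoint_left.1 (hbdisj i i' (Ne.symm hne))
      ((IsFixedPt.mem_iUnion_iterate_image_iff f.injective (hfix i')).1 hi') (hqb i')
  have hannuli : ⋃ k : ℤ, ⇑(f.toEquiv ^ k : Equiv.Perm X) '' (⋃ i, (⇑f '' b i) \ b i) =
      ⋃ i, V i \ {q i} := by
    simp only [image_iUnion]
    rw [iUnion_comm]
    refine iUnion_congr fun i => ?_
    rw [← hbasin i]
    exact Equiv.Perm.iUnion_zpow_image_image_sdiff f.toEquiv (hbf i)
  rw [hωA, hAV, compl_sdiff_compl, hannuli, iUnion_sdiff_range_eq_iUnion_sdiff_singleton hqV]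

/-- Final assertion of Lemma 2(1): the punctured basin of the attracting set
`A` equals the union of the integer iterates of the fundamental annuli
`f(b i) ∖ b i` around the sources. -/
theorem punctured_basin_of_attractor_eq_iterates_of_annuli
    {X : Type*} [MetricSpace X] [CompactSpace X] [Nonempty X]
    (f : X ≃ₜ X) (m r : ℕ)
    (σ : Fin m → Set X) (q : Fin r → X) (b : Fin r → Set X)
    (hσne : ∀ j, (σ j).Nonempty)
    (hσclosed : ∀ j, IsClosed (σ j))
    (hσdisj : ∀ j j', j ≠ j' → Disjoint (σ j) (σ j'))
    (hσinv : ∀ j, ⇑f '' σ j = σ j)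
    (hfix : ∀ i, f (q i) = q i)
    (hbopen : ∀ i, IsOpen (b i))
    (hqb : ∀ i, q i ∈ b i)
    (hbdisj : ∀ i i', i ≠ i' → Disjoint (b i) (b i'))
    (hexp : ∀ i, closure (b i) ⊆ ⇑f '' b i)
    (hbasin : ∀ i, (⋂ k : ℕ, (⇑f)^[k] ⁻¹' b i) = {q i})
    (hbσ : ∀ i j, Disjoint (b i) (σ j))
    (hω : ∀ x, omegaSet (⇑f) x ⊆ Set.range q ∪ ⋃ j, σ j)
    (hα : ∀ x, omegaSet (⇑f.symm) x ⊆ Set.range q ∪ ⋃ j, σ j)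
    (A : Set X) (hA : A = ⋂ k : ℕ, (⇑f)^[k] '' (⋃ i, b i)ᶜ) :
    { x | omegaSet (⇑f) x ⊆ A } \ A =
      ⋃ k : ℤ, ⇑(f.toEquiv ^ k : Equiv.Perm X) '' (⋃ i, (⇑f '' b i) \ b i) :=
  punctured_basin_of_attractor_eq_iterates_of_annuli_general f m r σ q b hσinv hfix hbopen hqb
    hbdisj hexp hbasin hbσ hω A hA
end
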